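/- The marginal density of the mean parameter under an NIG distribution is a Student-t density: for any δ ∈ ℝ, γ > 0, α > 0, β > 0, and any μ ∈ ℝ, the Lebesgue integral over s ∈ (0,∞) of p(μ,s) = (β^α/Γ(α)) · (√γ/√(2πs)) · s^{−(α+1)} · exp(−(2β+γ(δ−μ)²)/(2s)) equals (Γ(α+1/2)/Γ(α)) · √(γ/π) · (2β)^α · (γ(μ−δ)² + 2β)^{−(α+1/2)}. -/
import Mathlib


open MeasureTheory

open Real Set

lemma aux_inv_gamma (a c : ℝ) (ha : 0 < a) (hc : 0 < c) :
    ∫ s in Set.Ioi (0:ℝ), s ^ (-a - 1) * Real.exp (-(c / s)) = Real.Gamma a * c ^ (-a) := by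
  have h := integral_comp_rpow_Ioi (fun y => y ^ (a - 1) * Real.exp (-c * y))
    (p := -1) (by norm_num)
  simp only [smul_eq_mul] at h
  rw [setIntegral_congr_fun measurableSet_Ioi (g := fun x : ℝ =>
      |(-1:ℝ)| * x ^ ((-1:ℝ) - 1) * ((x ^ (-1:ℝ)) ^ (a - 1) * Real.exp (-c * x ^ (-1:ℝ))))
      (fun x hx => ?_), h]
  · have := integral_rpow_mul_exp_neg_mul_rpow one_pos (by linarith : (-1:ℝ) < a - 1) hc
    simp only [Real.rpow_one, sub_add_cancel, div_one, neg_div] at this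
    rw [this]; ring
  · have hx0 : (0:ℝ) < x := hx
    dsimp only
    rw [show |(-1:ℝ)| = 1 by norm_num, one_mul, ← Real.rpow_mul hx0.le,
      ← mul_assoc, ← Real.rpow_add hx0, Real.rpow_neg_one, div_eq_mul_inv]
    ring_nf

/-- The Normal-Inverse-Gamma (NIG) density with parameters `δ γ α β`, as a function of
the Gaussian mean `μ` and the Gaussian variance `s = σ²`. -/
noncomputable def nigPdf (δ γ α β μ s : ℝ) : ℝ :=
  (β ^ α / Real.Gamma α) * (Real.sqrt γ / Real.sqrt (2 * Real.pi * s)) *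
    s ^ (-(α + 1)) * Real.exp (-(2 * β + γ * (δ - μ) ^ 2) / (2 * s))

/-- The marginal density of the mean parameter under an NIG distribution is a
Student-t density. -/
theorem nigPdf_marginal_mean (δ γ α β : ℝ) (hγ : 0 < γ) (hα : 0 < α) (hβ : 0 < β)
    (μ : ℝ) :
    (∫ s in Set.Ioi (0 : ℝ), nigPdf δ γ α β μ s)
      = (Real.Gamma (α + 1 / 2) / Real.Gamma α) * Real.sqrt (γ / Real.pi) *
          (2 * β) ^ α * (γ * (μ - δ) ^ 2 + 2 * β) ^ (-(α + 1 / 2)) := by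
  have hπ := Real.pi_pos
  have hc : (0:ℝ) < γ * (μ - δ)^2 + 2*β := by positivity
  have hc2 : (0:ℝ) < (γ * (μ - δ)^2 + 2*β)/2 := by positivity
  have hΓ : (0:ℝ) < Real.Gamma α := Real.Gamma_pos_of_pos hα
  have key : ∫ s in Ioi (0:ℝ), nigPdf δ γ α β μ s
      = (β^α / Real.Gamma α * (Real.sqrt γ / Real.sqrt (2*Real.pi))) *
        ∫ s in Ioi (0:ℝ),
          s ^ (-(α+1/2) - 1) * Real.exp (-(((γ*(μ-δ)^2+2*β)/2)/s)) := by
    rw [← integral_const_mul]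
    refine setIntegral_congr_fun measurableSet_Ioi (fun s hs => ?_)
    have hs0 : (0:ℝ) < s := hs
    have hexp : Real.exp (-(2*β + γ*(δ-μ)^2)/(2*s))
        = Real.exp (-(((γ*(μ-δ)^2+2*β)/2)/s)) := by
      congr 1; field_simp; ring
    rw [nigPdf, hexp, Real.sqrt_mul (by positivity : (0:ℝ) ≤ 2*Real.pi) s,
      show (-(α+1/2) - 1 : ℝ) = (-(α+1)) + (-(1/2)) by ring, Real.rpow_add hs0,
      Real.rpow_neg hs0.le (1/2), ← Real.sqrt_eq_rpow]
    have hss : Real.sqrt s ≠ 0 := by positivity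
    have hsp : Real.sqrt (2*Real.pi) ≠ 0 := by positivity
    field_simp
  rw [key, aux_inv_gamma _ _ (by positivity) hc2]
  have e1 : ((γ*(μ-δ)^2+2*β)/2 : ℝ) ^ (-(α+1/2))
      = (γ*(μ-δ)^2+2*β) ^ (-(α+1/2)) * (2:ℝ)^(α+1/2) := by
    rw [Real.div_rpow hc.le (by norm_num : (0:ℝ) ≤ 2),
      Real.rpow_neg (by norm_num : (0:ℝ) ≤ 2), div_eq_mul_inv, inv_inv]
  have e2 : (2:ℝ)^(α+1/2) = 2^α * Real.sqrt 2 := by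
    rw [Real.rpow_add (by norm_num : (0:ℝ) < 2), ← Real.sqrt_eq_rpow]
  have e3 : Real.sqrt (2*Real.pi) = Real.sqrt 2 * Real.sqrt Real.pi :=
    Real.sqrt_mul (by norm_num) _
  have e4 : Real.sqrt (γ/Real.pi) = Real.sqrt γ / Real.sqrt Real.pi :=
    Real.sqrt_div hγ.le _
  have e5 : ((2:ℝ)*β)^α = 2^α * β^α := Real.mul_rpow (by norm_num) hβ.le
  have h2 : Real.sqrt 2 ≠ 0 := by positivity
  have hp2 : Real.sqrt Real.pi ≠ 0 := by positivity
  rw [e1, e2, e3, e4, e5]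
  field_simp
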